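/- Let F_t = {f_{(i,t)}(x) := t·f_i(x) + q_i : 1 ≤ i ≤ N} be a one-parameter affine family on ℝ^d with t_0 = 1/ρ(F). The following are equivalent: (1) F_t is quasi-linear; (2) for each t ∈ [0, t_0) there is a point q_t ∈ ℝ^d that is the unique fixed point of f_{(i,t)} for every i = 1, …, N; (3) the attractor A_t of F_t is a single point for every t ∈ [0, t_0). -/

import Mathlib

open Metric Filter Set
open scoped RealInnerProductSpace

noncomputable section

/-- The Hutchinson operator associated with a family of maps. -/
def hutch {ι E : Type*} (f : ι → E → E) (K : Set E) : Set E := ⋃ i, f i '' K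

/-- `A` is the attractor of the IFS `f`: `A` is a nonempty compact set such that the iterates
of the Hutchinson operator applied to any nonempty compact set converge to `A` in the
Hausdorff metric. -/
def IsAttractor {ι E : Type*} [MetricSpace E] (f : ι → E → E) (A : Set E) : Prop :=
  A.Nonempty ∧ IsCompact A ∧
    ∀ K : Set E, K.Nonempty → IsCompact K →
      Tendsto (fun n : ℕ => hausdorffDist ((hutch f)^[n] K) A) atTop (nhds 0)

/-- The joint spectral radius of a finite family of continuous linear maps. -/
def jsr {E : Type*} [NormedAddCommGroup E] [NormedSpace ℝ E] {N : ℕ}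
    (L : Fin N → E →L[ℝ] E) : ℝ :=
  limsup (fun k : ℕ =>
    (⨆ σ : Fin k → Fin N, ‖(List.ofFn fun j : Fin k => L (σ j)).prod‖) ^ ((1 : ℝ) / (k : ℝ)))
    atTop

/-- The one-parameter affine family `f_{(i,t)}(x) = t • f_i(x) + q_i` where
`f_i(x) = L_i x + a_i`. -/
def fam {E : Type*} [NormedAddCommGroup E] [NormedSpace ℝ E] {N : ℕ}
    (L : Fin N → E →L[ℝ] E) (a q : Fin N → E) (t : ℝ) (i : Fin N) (x : E) : E :=
  t • (L i x + a i) + q i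

/-- The family is linear: every `f_{(i,t)}`, `t ∈ [0, t₀)`, is conjugate to a linear map by a
single invertible affine map `h` independent of `i` and `t`. -/
def IsLinearFamily {E : Type*} [NormedAddCommGroup E] [NormedSpace ℝ E] {N : ℕ}
    (L : Fin N → E →L[ℝ] E) (a q : Fin N → E) : Prop :=
  ∃ h : E ≃ᵃ[ℝ] E, ∀ i : Fin N, ∀ t : ℝ, 0 ≤ t → t < 1 / jsr L →
    ∃ M : E →ₗ[ℝ] E, ∀ x, fam L a q t i x = h.symm (M (h x))

/-- The family is quasi-linear: for each `t ∈ [0, t₀)` there is an invertible affine map `h_t`,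
independent of `i`, conjugating every `f_{(i,t)}` to a linear map. -/
def IsQuasiLinearFamily {E : Type*} [NormedAddCommGroup E] [NormedSpace ℝ E] {N : ℕ}
    (L : Fin N → E →L[ℝ] E) (a q : Fin N → E) : Prop :=
  ∀ t : ℝ, 0 ≤ t → t < 1 / jsr L → ∃ h : E ≃ᵃ[ℝ] E, ∀ i : Fin N,
    ∃ M : E →ₗ[ℝ] E, ∀ x, fam L a q t i x = h.symm (M (h x))

/-- The family is semi-linear: for each `i` there is an invertible affine map `h_i`,
independent of `t`, conjugating `f_{(i,t)}` to a linear map for all `t ∈ [0, t₀)`. -/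
def IsSemiLinearFamily {E : Type*} [NormedAddCommGroup E] [NormedSpace ℝ E] {N : ℕ}
    (L : Fin N → E →L[ℝ] E) (a q : Fin N → E) : Prop :=
  ∀ i : Fin N, ∃ h : E ≃ᵃ[ℝ] E, ∀ t : ℝ, 0 ≤ t → t < 1 / jsr L →
    ∃ M : E →ₗ[ℝ] E, ∀ x, fam L a q t i x = h.symm (M (h x))

/-- The hyperplane `{x | φ x = c}` (with `φ` a nonzero linear functional) separates `S`:
it misses `S` and `S` meets both open half-spaces. -/
def SeparatesHyp {E : Type*} [AddCommGroup E] [Module ℝ E]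
    (φ : E →ₗ[ℝ] ℝ) (c : ℝ) (S : Set E) : Prop :=
  φ ≠ 0 ∧ (∀ x ∈ S, φ x ≠ c) ∧ (∃ x ∈ S, φ x < c) ∧ (∃ x ∈ S, c < φ x)

/-- A set is strongly disconnected if some hyperplane separates it. -/
def StronglyDisconnected {E : Type*} [AddCommGroup E] [Module ℝ E] (S : Set E) : Prop :=
  ∃ (φ : E →ₗ[ℝ] ℝ) (c : ℝ), SeparatesHyp φ c S

/-- A set is weakly connected if no hyperplane separates it. -/
def WeaklyConnected {E : Type*} [AddCommGroup E] [Module ℝ E] (S : Set E) : Prop :=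
  ¬ StronglyDisconnected S

/-- A weak component of a compact set `S` is a maximal weakly connected compact subset of `S`. -/
def IsWeakComponent {E : Type*} [NormedAddCommGroup E] [NormedSpace ℝ E]
    (S C : Set E) : Prop :=
  C.Nonempty ∧ C ⊆ S ∧ IsCompact C ∧ WeaklyConnected C ∧
    ∀ C' : Set E, C' ⊆ S → IsCompact C' → WeaklyConnected C' → C ⊆ C' → C' = C

/-- A (nondegenerate right circular) cone with apex `x`, axis direction `v`, radius `r` and
half-angle `θ`. -/
def coneSet {E : Type*} [NormedAddCommGroup E] [InnerProductSpace ℝ E]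
    (x v : E) (r θ : ℝ) : Set E :=
  {y | ‖y - x‖ ≤ r ∧ ‖y - x‖ * Real.cos θ ≤ ⟪y - x, v⟫}

/-- A boundary point `x` of `K` is a cusp of `K` if no cone with apex `x` is contained in `K`. -/
def IsCuspPoint {E : Type*} [NormedAddCommGroup E] [InnerProductSpace ℝ E]
    (K : Set E) (x : E) : Prop :=
  x ∈ frontier K ∧ ∀ (v : E) (r θ : ℝ), ‖v‖ = 1 → 0 < r → 0 < θ → θ < Real.pi / 2 →
    ¬ coneSet x v r θ ⊆ K

/-- The one-parameter family is tame: whenever the attractor `A_t` has nonempty interior,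
some fixed point of a map of `F_t` is not a cusp of `A_t`. -/
def TameFamily {E : Type*} [NormedAddCommGroup E] [InnerProductSpace ℝ E] {N : ℕ}
    (L : Fin N → E →L[ℝ] E) (a q : Fin N → E) : Prop :=
  ∀ t : ℝ, 0 ≤ t → t < 1 / jsr L → ∀ A : Set E, IsAttractor (fam L a q t) A →
    (interior A).Nonempty → ∃ (i : Fin N) (x : E), fam L a q t i x = x ∧ ¬ IsCuspPoint A x

end

/-! Quasi-linearity of `F_t` amounts to all maps `f_{(i,t)}` sharing a fixed point `p`: the
translation `x ↦ x - p` then conjugates each of them to the linear map `t • L i`. A fixed point of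
`f_{(i,t)}` is unique because `|μ| ≤ ρ(F)` for every real eigenvalue `μ` of `L i`, so `t • L i`
has no eigenvalue `1` when `t < 1 / ρ(F)`.

If `p` is a common fixed point, `{p}` is invariant under the Hutchinson operator and is therefore
the attractor. Conversely, the words of length `n` in `F_t` are `tⁿ · sup_σ ‖L_σ‖`-Lipschitz and
this constant tends to `0` for `t < 1 / ρ(F)`, so some iterate of the Hutchinson operator
contracts the complete space of nonempty compact sets and `A_t` exists. If `A_t = {p}`, the orbit
of `p` under any `f_{(i,t)}` stays in the Hutchinson iterates of `{p}`, hence converges to `p`,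
which is therefore fixed by every `f_{(i,t)}`. -/

open TopologicalSpace Topology

section IFS

variable {ι X : Type*}

def wordMap (f : ι → X → X) : {n : ℕ} → (Fin n → ι) → X → X
  | 0, _ => id
  | _ + 1, σ => f (σ 0) ∘ wordMap f (Fin.tail σ)

theorem hutch_iterate (f : ι → X → X) (n : ℕ) :
    (hutch f)^[n] = hutch fun σ : Fin n → ι => wordMap f σ := by
  induction n with
  | zero =>
    funext K
    simp only [Function.iterate_zero, id_eq, hutch, wordMap, image_id, iUnion_const]
  | succ n ih =>
    funext K
    rw [Function.iterate_succ', Function.comp_apply, ih]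
    ext x
    simp only [hutch, mem_iUnion, mem_image]
    constructor
    · rintro ⟨i, y, ⟨σ, z, hz, rfl⟩, rfl⟩
      exact ⟨Fin.cons i σ, z, hz, by simp [wordMap]⟩
    · rintro ⟨τ, z, hz, rfl⟩
      exact ⟨τ 0, wordMap f (Fin.tail τ) z, ⟨Fin.tail τ, z, hz, rfl⟩, rfl⟩

theorem iterate_mem_hutch_iterate (f : ι → X → X) (i : ι) {x : X} {K : Set X} (hx : x ∈ K)
    (n : ℕ) : (f i)^[n] x ∈ (hutch f)^[n] K := by
  induction n with
  | zero => exact hx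
  | succ n ih =>
    rw [Function.iterate_succ_apply', Function.iterate_succ_apply']
    exact mem_iUnion.2 ⟨i, mem_image_of_mem _ ih⟩

theorem hutch_singleton_of_forall_isFixedPt [Nonempty ι] {f : ι → X → X} {p : X}
    (hp : ∀ i, f i p = p) : hutch f {p} = {p} := by
  simp [hutch, hp]

section Topology

variable [TopologicalSpace X] [Finite ι] {f : ι → X → X}

theorem isCompact_hutch (hf : ∀ i, Continuous (f i)) {K : Set X} (hK : IsCompact K) :
    IsCompact (hutch f K) :=
  isCompact_iUnion fun i => hK.image (hf i)

theorem isCompact_hutch_iterate (hf : ∀ i, Continuous (f i)) {K : Set X} (hK : IsCompact K)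
    (n : ℕ) : IsCompact ((hutch f)^[n] K) := by
  induction n with
  | zero => exact hK
  | succ n ih => rw [Function.iterate_succ_apply']; exact isCompact_hutch hf ih

variable [Nonempty ι]

def hutchCompacts (hf : ∀ i, Continuous (f i)) (K : NonemptyCompacts X) : NonemptyCompacts X :=
  ⟨⟨hutch f K, isCompact_hutch hf K.isCompact⟩,
    nonempty_iUnion.2 ⟨Classical.arbitrary ι, K.nonempty.image _⟩⟩

theorem coe_hutchCompacts_iterate (hf : ∀ i, Continuous (f i)) (n : ℕ)
    (K : NonemptyCompacts X) : ((hutchCompacts hf)^[n] K : Set X) = (hutch f)^[n] K := by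
  induction n generalizing K with
  | zero => rfl
  | succ n ih => rw [Function.iterate_succ_apply, ih, Function.iterate_succ_apply]; rfl

end Topology

end IFS

section Hausdorff

variable {X : Type*} [PseudoEMetricSpace X] {c : NNReal} {g : X → X}

theorem LipschitzWith.infEDist_image_le (hg : LipschitzWith c g) (x : X) {K : Set X}
    (hK : K.Nonempty) : infEDist (g x) (g '' K) ≤ c * infEDist x K := by
  have : Nonempty K := hK.to_subtype
  calc infEDist (g x) (g '' K) ≤ ⨅ y : K, c * edist x y :=
        le_iInf fun y => (infEDist_le_edist_of_mem (mem_image_of_mem g y.2)).trans (hg x y)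
    _ = c * infEDist x K := by rw [infEDist, iInf_subtype', ENNReal.mul_iInf (by simp)]

theorem LipschitzWith.hausdorffEDist_image_le (hg : LipschitzWith c g) {K K' : Set X}
    (hK : K.Nonempty) (hK' : K'.Nonempty) :
    hausdorffEDist (g '' K) (g '' K') ≤ c * hausdorffEDist K K' := by
  refine hausdorffEDist_le_of_infEDist ?_ ?_
  · rintro _ ⟨x, hx, rfl⟩
    exact (hg.infEDist_image_le x hK').trans (by gcongr; exact infEDist_le_hausdorffEDist_of_mem hx)
  · rintro _ ⟨x, hx, rfl⟩
    rw [hausdorffEDist_comm]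
    exact (hg.infEDist_image_le x hK).trans (by gcongr; exact infEDist_le_hausdorffEDist_of_mem hx)

theorem hausdorffEDist_hutch_le {κ : Type*} {g : κ → X → X} (hg : ∀ j, LipschitzWith c (g j))
    {K K' : Set X} (hK : K.Nonempty) (hK' : K'.Nonempty) :
    hausdorffEDist (hutch g K) (hutch g K') ≤ c * hausdorffEDist K K' :=
  hausdorffEDist_iUnion_le.trans (iSup_le fun j => (hg j).hausdorffEDist_image_le hK hK')

end Hausdorff

section Attractor

variable {ι X : Type*} [MetricSpace X] {f : ι → X → X}

theorem IsAttractor.eq_of_hutch_eq {A K : Set X} (hA : IsAttractor f A) (hK : K.Nonempty)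
    (hKc : IsCompact K) (hfix : hutch f K = K) : A = K := by
  have hlim := hA.2.2 K hK hKc
  simp only [Function.iterate_fixed hfix] at hlim
  have h0 : hausdorffDist K A = 0 := tendsto_nhds_unique tendsto_const_nhds hlim
  exact ((hKc.isClosed.hausdorffDist_zero_iff_eq hA.2.1.isClosed
    (hausdorffEDist_ne_top_of_nonempty_of_bounded hK hA.1 hKc.isBounded
      hA.2.1.isBounded)).1 h0).symm

theorem IsAttractor.apply_eq_of_eq_singleton [Finite ι] (hf : ∀ i, Continuous (f i)) {p : X}
    (hA : IsAttractor f {p}) (i : ι) : f i p = p := by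
  have hdist (n : ℕ) : dist ((f i)^[n] p) p ≤ hausdorffDist ((hutch f)^[n] {p}) {p} := by
    have hmem := iterate_mem_hutch_iterate f i (mem_singleton p) n
    simpa using infDist_le_hausdorffDist_of_mem hmem
      (hausdorffEDist_ne_top_of_nonempty_of_bounded ⟨_, hmem⟩ (singleton_nonempty p)
        (isCompact_hutch_iterate hf isCompact_singleton n).isBounded
        Bornology.isBounded_singleton)
  have hlim : Tendsto (fun n => (f i)^[n] p) atTop (𝓝 p) :=
    tendsto_iff_dist_tendsto_zero.2 <| squeeze_zero (fun n => dist_nonneg) hdist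
      (hA.2.2 _ (singleton_nonempty p) isCompact_singleton)
  exact isFixedPt_of_tendsto_iterate hlim (hf i).continuousAt

theorem exists_isAttractor [Nonempty X] [CompleteSpace X] [Finite ι] [Nonempty ι]
    {C : ℕ → NNReal} (hC : ∀ n (σ : Fin n → ι), LipschitzWith (C n) (wordMap f σ))
    (hC0 : Tendsto C atTop (𝓝 0)) : ∃ A, IsAttractor f A := by
  have hf (i : ι) : Continuous (f i) := (hC 1 fun _ => i).continuous
  set T := hutchCompacts hf
  have hT (n : ℕ) : LipschitzWith (C n) T^[n] := fun K K' => by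
    show hausdorffEDist ((T^[n] K : Set X)) (T^[n] K') ≤ C n * hausdorffEDist (K : Set X) K'
    rw [coe_hutchCompacts_iterate, coe_hutchCompacts_iterate, hutch_iterate]
    exact hausdorffEDist_hutch_le (hC n) K.nonempty K'.nonempty
  obtain ⟨k, hk⟩ := (hC0.eventually (gt_mem_nhds zero_lt_one)).exists
  have hcontr : ContractingWith (C k) T^[k] := ⟨hk, hT k⟩
  set A := hcontr.fixedPoint T^[k]
  have hTA : T A = A := ContractingWith.isFixedPt_fixedPoint_iterate hcontr
  refine ⟨A, A.nonempty, A.isCompact, fun K hK hKc => ?_⟩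
  let K' : NonemptyCompacts X := ⟨⟨K, hKc⟩, hK⟩
  have hle (n : ℕ) : hausdorffDist ((hutch f)^[n] K) A ≤ C n * dist K' A := by
    calc hausdorffDist ((hutch f)^[n] K) A = dist (T^[n] K') (T^[n] A) := by
          rw [Function.iterate_fixed hTA, NonemptyCompacts.dist_eq, coe_hutchCompacts_iterate]; rfl
      _ ≤ C n * dist K' A := (hT n).dist_le_mul _ _
  refine squeeze_zero (fun n => hausdorffDist_nonneg) hle ?_
  simpa using (NNReal.tendsto_coe.2 hC0).mul_const (dist K' A)

end Attractor

section JointSpectralRadius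

variable {E : Type*} [NormedAddCommGroup E] [NormedSpace ℝ E] {N : ℕ} {L : Fin N → E →L[ℝ] E}

variable (L) in
noncomputable def wordNormSup (k : ℕ) : ℝ :=
  ⨆ σ : Fin k → Fin N, ‖(List.ofFn fun j : Fin k => L (σ j)).prod‖

theorem wordNormSup_nonneg (k : ℕ) : 0 ≤ wordNormSup L k :=
  Real.iSup_nonneg fun _ => norm_nonneg _

theorem norm_prod_le_wordNormSup {k : ℕ} (σ : Fin k → Fin N) :
    ‖(List.ofFn fun j : Fin k => L (σ j)).prod‖ ≤ wordNormSup L k :=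
  le_ciSup (f := fun σ : Fin k → Fin N => ‖(List.ofFn fun j : Fin k => L (σ j)).prod‖)
    (finite_range _).bddAbove σ

theorem jsr_eq_limsup_wordNormSup :
    jsr L = limsup (fun k : ℕ => wordNormSup L k ^ ((1 : ℝ) / k)) atTop :=
  rfl

theorem jsr_pos_of_lt_one_div {t : ℝ} (ht0 : 0 ≤ t) (ht : t < 1 / jsr L) : 0 < jsr L := by
  by_contra h
  linarith [one_div_nonpos.2 (not_lt.1 h)]

theorem isBoundedUnder_wordNormSup_rpow (hρ : 0 < jsr L) :
    IsBoundedUnder (· ≤ ·) atTop fun k : ℕ => wordNormSup L k ^ ((1 : ℝ) / k) := by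
  by_contra hb
  rw [jsr_eq_limsup_wordNormSup, Real.limsup_of_not_isBoundedUnder hb] at hρ
  exact lt_irrefl 0 hρ

theorem abs_le_jsr_of_apply_eq_smul (hρ : 0 < jsr L) {i : Fin N} {v : E} {μ : ℝ} (hv : v ≠ 0)
    (hLv : L i v = μ • v) : |μ| ≤ jsr L := by
  have hpow (k : ℕ) : (L i ^ k) v = μ ^ k • v := by
    induction k with
    | zero => simp
    | succ k ih =>
      rw [pow_succ', mul_apply_eq_comp, ih, map_smul, hLv, smul_smul, pow_succ]
  have hle (k : ℕ) : |μ| ^ k ≤ wordNormSup L k := by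
    have hnorm : |μ| ^ k * ‖v‖ ≤ ‖L i ^ k‖ * ‖v‖ := by
      simpa [hpow, norm_smul] using (L i ^ k).le_opNorm v
    calc |μ| ^ k ≤ ‖L i ^ k‖ := le_of_mul_le_mul_right hnorm (norm_pos_iff.2 hv)
      _ = ‖(List.ofFn fun _ : Fin k => L i).prod‖ := by rw [List.ofFn_const, List.prod_replicate]
      _ ≤ wordNormSup L k := norm_prod_le_wordNormSup fun _ => i
  have hroot : ∀ k ≥ 1, |μ| ≤ wordNormSup L k ^ ((1 : ℝ) / k) := fun k hk => by
    calc |μ| = (|μ| ^ k) ^ ((1 : ℝ) / k) := by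
          rw [one_div, Real.pow_rpow_inv_natCast (abs_nonneg μ) (by omega)]
      _ ≤ wordNormSup L k ^ ((1 : ℝ) / k) := by gcongr; exact hle k
  rw [jsr_eq_limsup_wordNormSup]
  exact le_limsup_of_frequently_le (eventually_atTop.2 ⟨1, hroot⟩).frequently
    (isBoundedUnder_wordNormSup_rpow hρ)

theorem tendsto_pow_mul_wordNormSup {t : ℝ} (ht0 : 0 ≤ t) (ht : t < 1 / jsr L) :
    Tendsto (fun n => t ^ n * wordNormSup L n) atTop (𝓝 0) := by
  have hρ := jsr_pos_of_lt_one_div ht0 ht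
  obtain ⟨c, htc, hc⟩ := exists_between ht
  have hc0 : 0 < c := ht0.trans_lt htc
  have hev : ∀ᶠ n : ℕ in atTop, wordNormSup L n ^ ((1 : ℝ) / n) < 1 / c :=
    eventually_lt_of_limsup_lt ((lt_one_div hc0 hρ).1 hc) (isBoundedUnder_wordNormSup_rpow hρ)
  have hbound : ∀ᶠ n : ℕ in atTop, t ^ n * wordNormSup L n ≤ (t / c) ^ n := by
    filter_upwards [hev, eventually_ge_atTop 1] with n hn hn1
    have hw : wordNormSup L n ≤ (1 / c) ^ n := by
      calc wordNormSup L n = (wordNormSup L n ^ ((1 : ℝ) / n)) ^ n := by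
            rw [one_div, Real.rpow_inv_natCast_pow (wordNormSup_nonneg n) (by omega)]
        _ ≤ (1 / c) ^ n := pow_le_pow_left₀ (Real.rpow_nonneg (wordNormSup_nonneg n) _) hn.le n
    calc t ^ n * wordNormSup L n ≤ t ^ n * (1 / c) ^ n := by gcongr
      _ = (t / c) ^ n := by rw [← mul_pow, mul_one_div]
  exact squeeze_zero' (Eventually.of_forall fun n => mul_nonneg (pow_nonneg ht0 n)
    (wordNormSup_nonneg n)) hbound
    (tendsto_pow_atTop_nhds_zero_of_lt_one (by positivity) ((div_lt_one hc0).2 htc))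

end JointSpectralRadius

section AffineFamily

variable {E : Type*} [NormedAddCommGroup E] [NormedSpace ℝ E] {N : ℕ} {L : Fin N → E →L[ℝ] E}
  {a q : Fin N → E} {t : ℝ}

theorem fam_sub (i : Fin N) (x y : E) :
    fam L a q t i x - fam L a q t i y = t • L i (x - y) := by
  simp only [fam, map_sub, smul_sub, smul_add]
  abel

theorem continuous_fam (i : Fin N) : Continuous (fam L a q t i) := by
  unfold fam
  fun_prop

theorem eq_zero_of_smul_apply_eq_self (ht0 : 0 ≤ t) (ht : t < 1 / jsr L) {i : Fin N} {v : E}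
    (hv : t • L i v = v) : v = 0 := by
  rcases ht0.eq_or_lt with rfl | htpos
  · simpa using hv.symm
  by_contra hv0
  have hρ := jsr_pos_of_lt_one_div ht0 ht
  have hinv := abs_le_jsr_of_apply_eq_smul hρ hv0 ((eq_inv_smul_iff₀ htpos.ne').2 hv)
  rw [abs_of_pos (inv_pos.2 htpos), ← one_div] at hinv
  exact hinv.not_gt ((lt_one_div htpos hρ).1 ht)

theorem eq_of_fam_eq_self (ht0 : 0 ≤ t) (ht : t < 1 / jsr L) {i : Fin N} {x y : E}
    (hx : fam L a q t i x = x) (hy : fam L a q t i y = y) : x = y :=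
  sub_eq_zero.1 <| eq_zero_of_smul_apply_eq_self ht0 ht (by rw [← fam_sub, hx, hy])

theorem wordMap_fam_sub {n : ℕ} (σ : Fin n → Fin N) (x y : E) :
    wordMap (fam L a q t) σ x - wordMap (fam L a q t) σ y =
      t ^ n • (List.ofFn fun j : Fin n => L (σ j)).prod (x - y) := by
  induction n with
  | zero => simp [wordMap]
  | succ n ih =>
    rw [wordMap, Function.comp_apply, Function.comp_apply, fam_sub, ih, List.ofFn_succ,
      List.prod_cons, map_smul, mul_apply_eq_comp, smul_smul, pow_succ']
    rfl

theorem lipschitzWith_wordMap_fam (ht0 : 0 ≤ t) {n : ℕ} (σ : Fin n → Fin N) :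
    LipschitzWith (t ^ n * wordNormSup L n).toNNReal (wordMap (fam L a q t) σ) :=
  LipschitzWith.of_dist_le' fun x y => by
    rw [dist_eq_norm, dist_eq_norm, wordMap_fam_sub, norm_smul, Real.norm_of_nonneg (by positivity),
      mul_assoc]
    gcongr
    exact ((List.ofFn fun j => L (σ j)).prod.le_opNorm _).trans
      (by gcongr; exact norm_prod_le_wordNormSup σ)

theorem exists_isAttractor_fam [CompleteSpace E] [Nonempty (Fin N)] (ht0 : 0 ≤ t)
    (ht : t < 1 / jsr L) : ∃ A, IsAttractor (fam L a q t) A :=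
  exists_isAttractor (fun _ σ => lipschitzWith_wordMap_fam ht0 σ)
    (by simpa using tendsto_real_toNNReal (tendsto_pow_mul_wordNormSup ht0 ht))

theorem isQuasiLinearFamily_iff_exists_fixed :
    IsQuasiLinearFamily L a q ↔
      ∀ t : ℝ, 0 ≤ t → t < 1 / jsr L → ∃ p : E, ∀ i, fam L a q t i p = p := by
  refine forall₃_congr fun t _ _ => ⟨fun ⟨h, hh⟩ => ⟨h.symm 0, fun i => ?_⟩, fun ⟨p, hp⟩ => ?_⟩
  · obtain ⟨M, hM⟩ := hh i
    rw [hM, AffineEquiv.apply_symm_apply, map_zero]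
  · refine ⟨AffineEquiv.constVAdd ℝ E (-p), fun i => ⟨t • (L i : E →ₗ[ℝ] E), fun x => ?_⟩⟩
    rw [AffineEquiv.eq_symm_apply]
    simp only [AffineEquiv.constVAdd_apply, vadd_eq_add, LinearMap.smul_apply,
      ContinuousLinearMap.coe_coe, neg_add_eq_sub]
    rw [← fam_sub i x p, hp i]

end AffineFamily

theorem stmt4_general {d N : ℕ} (hN : 2 ≤ N)
    (L : Fin N → EuclideanSpace ℝ (Fin d) →L[ℝ] EuclideanSpace ℝ (Fin d))
    (a q : Fin N → EuclideanSpace ℝ (Fin d)) :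
    (IsQuasiLinearFamily L a q ↔
      ∀ t : ℝ, 0 ≤ t → t < 1 / jsr L →
        ∃ p : EuclideanSpace ℝ (Fin d), ∀ i : Fin N,
          fam L a q t i p = p ∧ ∀ x, fam L a q t i x = x → x = p) ∧
    (IsQuasiLinearFamily L a q ↔
      ∀ t : ℝ, 0 ≤ t → t < 1 / jsr L →
        ∀ A : Set (EuclideanSpace ℝ (Fin d)), IsAttractor (fam L a q t) A →
          ∃ p, A = {p}) := by
  have : Nonempty (Fin N) := ⟨⟨0, by omega⟩⟩
  rw [isQuasiLinearFamily_iff_exists_fixed]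
  refine ⟨forall₃_congr fun t ht0 ht => ?_, forall₃_congr fun t ht0 ht => ?_⟩
  · exact ⟨fun ⟨p, hp⟩ => ⟨p, fun i => ⟨hp i, fun _ hx => eq_of_fam_eq_self ht0 ht hx (hp i)⟩⟩,
      fun ⟨p, hp⟩ => ⟨p, fun i => (hp i).1⟩⟩
  · constructor
    · rintro ⟨p, hp⟩ A hA
      exact ⟨p, hA.eq_of_hutch_eq (singleton_nonempty p) isCompact_singleton
        (hutch_singleton_of_forall_isFixedPt hp)⟩
    · intro hsingleton
      obtain ⟨A, hA⟩ := exists_isAttractor_fam (a := a) (q := q) ht0 ht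
      obtain ⟨p, rfl⟩ := hsingleton A hA
      exact ⟨p, hA.apply_eq_of_eq_singleton continuous_fam⟩

/-- A one-parameter affine family is quasi-linear iff for each `t ∈ [0, t₀)`
all maps `f_{(i,t)}` have a common unique fixed point, iff the attractor `A_t` is a single
point for every `t ∈ [0, t₀)`. -/
theorem stmt4 {d N : ℕ} (hN : 2 ≤ N)
    (L : Fin N → EuclideanSpace ℝ (Fin d) →L[ℝ] EuclideanSpace ℝ (Fin d))
    (hL : ∀ i, Function.Bijective (L i))
    (a q : Fin N → EuclideanSpace ℝ (Fin d))
    (hρ : 0 < jsr L) :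
    (IsQuasiLinearFamily L a q ↔
      ∀ t : ℝ, 0 ≤ t → t < 1 / jsr L →
        ∃ p : EuclideanSpace ℝ (Fin d), ∀ i : Fin N,
          fam L a q t i p = p ∧ ∀ x, fam L a q t i x = x → x = p) ∧
    (IsQuasiLinearFamily L a q ↔
      ∀ t : ℝ, 0 ≤ t → t < 1 / jsr L →
        ∀ A : Set (EuclideanSpace ℝ (Fin d)), IsAttractor (fam L a q t) A →
          ∃ p, A = {p}) :=
  stmt4_general hN L a q
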